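/- Given m sample tuples (s⁰_j, s_j, a_j, r_j, s'_j), j = 1,…,m, and an invertible positive semidefinite matrix Σ ∈ ℝ^{D×D}, define the empirical Lagrangian L̂_λ(d, ν; g, ω) = ν^⊤ Σ^{-1} · (1/m) Σ_{j=1}^m φ(s_j,a_j)(r_j + γ·g(s'_j) − φ(s_j,a_j)^⊤ω) − (λ/2) ν^⊤ν + (1/m) Σ_{j=1}^m g(s⁰_j) + ⟨d, Φω − B^⊤g⟩. Suppose ‖φ(s_j,a_j)‖₂ ≤ 1 and |r_j| ≤ √D for every j, ‖Φ^⊤d‖₂ ≤ 1/(1−γ), ‖Σ‖₂ ≤ D, and ‖g‖₂ ≤ G. If ν, ν̃ ∈ ℝ^D satisfy ‖Σ^{-1}(ν − ν̃)‖₂ ≤ ε₁ and max{‖Σ^{-1}ν‖₂, ‖Σ^{-1}ν̃‖₂} ≤ V, and ω, ω̃ ∈ ℝ^D satisfy ‖ω − ω̃‖₂ ≤ ε₂ and max{‖ω‖₂, ‖ω̃‖₂} ≤ W, then |L̂_λ(d, ν; g, ω) − L̂_λ(d, ν̃; g, ω̃)| ≤ ε₁ · (√D + γ·G + W + λ·D²·V)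 + ε₂ · (V + 1/(1−γ)). -/

import Mathlib

/-! By bilinearity and the symmetry of `Σ⁻¹`, the difference of the two Lagrangians splits
into `⟨Σ⁻¹(ν - ν'), u(ω)⟩ + ⟨Σ⁻¹ν', u(ω) - u(ω')⟩ - λ/2 (‖ν‖² - ‖ν'‖²) + ⟨Φᵀd, ω - ω'⟩`,
where `u(ω)` is the empirical average of `(r_j + γ g(s'_j) - φ_jᵀω) φ_j`; the `g`-terms cancel.
Each term is bounded by Cauchy–Schwarz: since `‖φ_j‖ ≤ 1`, averaging gives
`‖u(ω)‖ ≤ √D + γG + W` and `‖u(ω) - u(ω')‖ ≤ ‖ω - ω'‖`, and `‖ν‖ ≤ ‖Σ‖ ‖Σ⁻¹ν‖ ≤ DV`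
turns `‖ν‖² - ‖ν'‖² = ⟨ν + ν', ν - ν'⟩` into `2 D² V ε₁`. -/

open Matrix BigOperators

noncomputable def e2norm {n : Type*} [Fintype n] (x : n → ℝ) : ℝ :=
  Real.sqrt (∑ i, (x i)^2)

noncomputable def specNorm {m n : Type*} [Fintype m] [Fintype n] [DecidableEq n]
    (M : Matrix m n ℝ) : ℝ :=
  ‖LinearMap.toContinuousLinearMap (Matrix.toEuclideanLin M)‖

section e2norm

variable {n : Type*} [Fintype n]

lemma e2norm_eq_norm_toLp (x : n → ℝ) : e2norm x = ‖WithLp.toLp 2 x‖ := by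
  simp [EuclideanSpace.norm_eq, e2norm]

lemma e2norm_nonneg (x : n → ℝ) : 0 ≤ e2norm x :=
  Real.sqrt_nonneg _

lemma e2norm_smul (a : ℝ) (x : n → ℝ) : e2norm (a • x) = |a| * e2norm x := by
  simp only [e2norm_eq_norm_toLp, WithLp.toLp_smul, norm_smul, Real.norm_eq_abs]

lemma e2norm_add_le (x y : n → ℝ) : e2norm (x + y) ≤ e2norm x + e2norm y := by
  simpa only [e2norm_eq_norm_toLp, WithLp.toLp_add] using norm_add_le _ _

lemma e2norm_sub_comm (x y : n → ℝ) : e2norm (x - y) = e2norm (y - x) := by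
  simp only [e2norm_eq_norm_toLp, WithLp.toLp_sub, norm_sub_rev]

lemma e2norm_sum_le {ι : Type*} (s : Finset ι) (v : ι → n → ℝ) :
    e2norm (∑ j ∈ s, v j) ≤ ∑ j ∈ s, e2norm (v j) := by
  simpa only [e2norm_eq_norm_toLp, WithLp.toLp_sum] using norm_sum_le s _

lemma abs_le_e2norm (x : n → ℝ) (i : n) : |x i| ≤ e2norm x := by
  simpa only [e2norm_eq_norm_toLp, PiLp.toLp_apply, Real.norm_eq_abs] using
    PiLp.norm_apply_le (WithLp.toLp 2 x) i

lemma abs_dotProduct_le_e2norm_mul (x y : n → ℝ) : |x ⬝ᵥ y| ≤ e2norm x * e2norm y := by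
  simpa only [e2norm_eq_norm_toLp, EuclideanSpace.inner_toLp_toLp, star_trivial,
    dotProduct_comm y] using abs_real_inner_le_norm (WithLp.toLp 2 x) (WithLp.toLp 2 y)

lemma abs_dotProduct_le_of_e2norm_le {x y : n → ℝ} {a b : ℝ} (hx : e2norm x ≤ a)
    (hy : e2norm y ≤ b) : |x ⬝ᵥ y| ≤ a * b :=
  (abs_dotProduct_le_e2norm_mul x y).trans
    (mul_le_mul hx hy (e2norm_nonneg y) ((e2norm_nonneg x).trans hx))

lemma abs_dotProduct_self_sub_le {x y : n → ℝ} {R ε : ℝ} (hx : e2norm x ≤ R)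
    (hy : e2norm y ≤ R) (hxy : e2norm (x - y) ≤ ε) : |x ⬝ᵥ x - y ⬝ᵥ y| ≤ 2 * R * ε := by
  have hfactor : x ⬝ᵥ x - y ⬝ᵥ y = (x + y) ⬝ᵥ (x - y) := by
    simp only [add_dotProduct, dotProduct_sub, dotProduct_comm y x]
    ring
  rw [hfactor, two_mul]
  exact abs_dotProduct_le_of_e2norm_le ((e2norm_add_le x y).trans (add_le_add hx hy)) hxy

lemma e2norm_mulVec_le [DecidableEq n] {m : Type*} [Fintype m] (M : Matrix m n ℝ) (x : n → ℝ) :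
    e2norm (M *ᵥ x) ≤ specNorm M * e2norm x := by
  rw [e2norm_eq_norm_toLp, e2norm_eq_norm_toLp]
  exact (Matrix.toEuclideanLin M).toContinuousLinearMap.le_opNorm (WithLp.toLp 2 x)

lemma e2norm_le_of_e2norm_inv_mulVec_le [DecidableEq n] {M : Matrix n n ℝ} (hM : IsUnit M.det)
    {c a : ℝ} (hMc : specNorm M ≤ c) {x : n → ℝ} (hx : e2norm (M⁻¹ *ᵥ x) ≤ a) :
    e2norm x ≤ c * a := by
  calc e2norm x = e2norm (M *ᵥ (M⁻¹ *ᵥ x)) := by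
        rw [Matrix.mulVec_mulVec, Matrix.mul_nonsing_inv M hM, Matrix.one_mulVec]
    _ ≤ specNorm M * e2norm (M⁻¹ *ᵥ x) := e2norm_mulVec_le M _
    _ ≤ c * a := mul_le_mul hMc hx (e2norm_nonneg _) ((norm_nonneg _).trans hMc)

lemma abs_add_mul_sub_dotProduct_le {r γ x R G W : ℝ} {φ ω : n → ℝ} (hr : |r| ≤ R) (hγ : 0 ≤ γ)
    (hx : |x| ≤ G) (hφ : e2norm φ ≤ 1) (hω : e2norm ω ≤ W) :
    |r + γ * x - φ ⬝ᵥ ω| ≤ R + γ * G + W := by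
  have hγx : |γ * x| ≤ γ * G := by
    rw [abs_mul, abs_of_nonneg hγ]
    exact mul_le_mul_of_nonneg_left hx hγ
  have hφω := abs_dotProduct_le_of_e2norm_le hφ hω
  calc |r + γ * x - φ ⬝ᵥ ω| ≤ |r| + |γ * x| + |φ ⬝ᵥ ω| :=
        (abs_sub _ _).trans (add_le_add_left (abs_add_le _ _) _)
    _ ≤ R + γ * G + W := by linarith

end e2norm

noncomputable def sampleMoment {n : Type*} {m : ℕ} (φ : Fin m → n → ℝ) (y : Fin m → ℝ) : n → ℝ :=
  (m : ℝ)⁻¹ • ∑ j, y j • φ j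

lemma sampleMoment_sub {n : Type*} {m : ℕ} (φ : Fin m → n → ℝ) (y y' : Fin m → ℝ) :
    sampleMoment φ y - sampleMoment φ y' = sampleMoment φ (y - y') := by
  simp only [sampleMoment, ← smul_sub, ← Finset.sum_sub_distrib, Pi.sub_apply, sub_smul]

section sampleMoment

variable {n : Type*} [Fintype n] {m : ℕ} {φ : Fin m → n → ℝ}

lemma e2norm_sampleMoment_le (hφ : ∀ j, e2norm (φ j) ≤ 1) {y : Fin m → ℝ} {C : ℝ}
    (hy : ∀ j, |y j| ≤ C) (hC : 0 ≤ C) : e2norm (sampleMoment φ y) ≤ C := by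
  have hsum : e2norm (∑ j, y j • φ j) ≤ m * C :=
    calc e2norm (∑ j, y j • φ j) ≤ ∑ j, |y j| * e2norm (φ j) := by
          simpa only [e2norm_smul] using e2norm_sum_le Finset.univ fun j => y j • φ j
      _ ≤ ∑ _j : Fin m, C * 1 :=
          Finset.sum_le_sum fun j _ => mul_le_mul (hy j) (hφ j) (e2norm_nonneg _) hC
      _ = m * C := by simp
  rw [sampleMoment, e2norm_smul, abs_of_nonneg (by positivity)]
  rcases Nat.eq_zero_or_pos m with rfl | hm
  · simpa using hC
  · calc (m : ℝ)⁻¹ * e2norm (∑ j, y j • φ j) ≤ (m : ℝ)⁻¹ * (m * C) := by gcongr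
      _ = C := by field_simp

lemma e2norm_sampleMoment_residual_sub_le (hφ : ∀ j, e2norm (φ j) ≤ 1) (c : Fin m → ℝ)
    {ω ω' : n → ℝ} {ε : ℝ} (hω : e2norm (ω - ω') ≤ ε) :
    e2norm (sampleMoment φ (fun j => c j - φ j ⬝ᵥ ω) - sampleMoment φ (fun j => c j - φ j ⬝ᵥ ω'))
      ≤ ε := by
  rw [sampleMoment_sub]
  refine e2norm_sampleMoment_le hφ (fun j => ?_) ((e2norm_nonneg _).trans hω)
  have hj : c j - φ j ⬝ᵥ ω - (c j - φ j ⬝ᵥ ω') = φ j ⬝ᵥ (ω' - ω) := by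
    rw [dotProduct_sub]; ring
  simpa only [Pi.sub_apply, hj, one_mul] using
    abs_dotProduct_le_of_e2norm_le (hφ j) ((e2norm_sub_comm ω' ω).trans_le hω)

end sampleMoment

lemma lagrangian_sub_eq {n k : Type*} [Fintype n] [Fintype k] {P : Matrix n n ℝ} (hP : P.IsSymm)
    (Φ : Matrix k n ℝ) (d b : k → ℝ) (c e : ℝ) (ν ν' u u' ω ω' : n → ℝ) :
    (ν ⬝ᵥ P *ᵥ u - c * (ν ⬝ᵥ ν) + e + d ⬝ᵥ (Φ *ᵥ ω - b))
        - (ν' ⬝ᵥ P *ᵥ u' - c * (ν' ⬝ᵥ ν') + e + d ⬝ᵥ (Φ *ᵥ ω' - b))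
      = P *ᵥ (ν - ν') ⬝ᵥ u + P *ᵥ ν' ⬝ᵥ (u - u') - c * (ν ⬝ᵥ ν - ν' ⬝ᵥ ν')
        + Φᵀ *ᵥ d ⬝ᵥ (ω - ω') := by
  have hP' : ∀ x y : n → ℝ, x ⬝ᵥ P *ᵥ y = P *ᵥ x ⬝ᵥ y := fun x y => by
    rw [dotProduct_mulVec, ← mulVec_transpose, hP.eq]
  have hΦ : ∀ x : n → ℝ, d ⬝ᵥ Φ *ᵥ x = Φᵀ *ᵥ d ⬝ᵥ x := fun x => by
    rw [dotProduct_mulVec, ← mulVec_transpose]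
  simp only [hP', dotProduct_sub, mulVec_sub, sub_dotProduct, hΦ]
  ring

theorem empirical_lagrangian_lipschitz_general
    (S A D m : ℕ)
    (γ lam G V W ε₁ ε₂ : ℝ) (hγ0 : 0 < γ) (hlam : 0 < lam)
    (Φ : Matrix (Fin S × Fin A) (Fin D) ℝ)
    (B : Matrix (Fin S) (Fin S × Fin A) ℝ)
    -- sample tuples (s⁰_j, (s_j, a_j), r_j, s'_j)
    (s0 : Fin m → Fin S) (sa : Fin m → Fin S × Fin A)
    (rj : Fin m → ℝ) (snext : Fin m → Fin S)
    (hφj : ∀ j, e2norm (Φ (sa j)) ≤ 1)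
    (hrj : ∀ j, |rj j| ≤ Real.sqrt D)
    (Sig : Matrix (Fin D) (Fin D) ℝ)
    (hSiginv : IsUnit Sig.det) (hSigpsd : Sig.PosSemidef) (hSignorm : specNorm Sig ≤ D)
    (d : Fin S × Fin A → ℝ) (hd : e2norm (Φᵀ.mulVec d) ≤ 1 / (1 - γ))
    (g : Fin S → ℝ) (hg : e2norm g ≤ G)
    (ν ν' ω ω' : Fin D → ℝ)
    (hνdiff : e2norm (Sig⁻¹.mulVec (ν - ν')) ≤ ε₁)
    (hνV : e2norm (Sig⁻¹.mulVec ν) ≤ V) (hν'V : e2norm (Sig⁻¹.mulVec ν') ≤ V)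
    (hωdiff : e2norm (ω - ω') ≤ ε₂)
    (hωW : e2norm ω ≤ W)
    -- the empirical Lagrangian
    (Lhat : (Fin S × Fin A → ℝ) → (Fin D → ℝ) → (Fin S → ℝ) → (Fin D → ℝ) → ℝ)
    (hLhat : ∀ d₀ ν₀ g₀ ω₀, Lhat d₀ ν₀ g₀ ω₀ =
      ν₀ ⬝ᵥ Sig⁻¹.mulVec ((m : ℝ)⁻¹ •
          ∑ j, (rj j + γ * g₀ (snext j) - Φ (sa j) ⬝ᵥ ω₀) • Φ (sa j))
        - lam / 2 * (ν₀ ⬝ᵥ ν₀)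
        + (m : ℝ)⁻¹ * ∑ j, g₀ (s0 j)
        + d₀ ⬝ᵥ (Φ.mulVec ω₀ - Bᵀ.mulVec g₀)) :
    |Lhat d ν g ω - Lhat d ν' g ω'|
      ≤ ε₁ * (Real.sqrt D + γ * G + W + lam * D^2 * V)
        + ε₂ * (V + 1 / (1 - γ)) := by
  set c : Fin m → ℝ := fun j => rj j + γ * g (snext j)
  set u : (Fin D → ℝ) → Fin D → ℝ := fun ω₀ =>
    sampleMoment (fun j => Φ (sa j)) (fun j => c j - Φ (sa j) ⬝ᵥ ω₀)
  have hsplit : Lhat d ν g ω - Lhat d ν' g ω' = Sig⁻¹ *ᵥ (ν - ν') ⬝ᵥ u ω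
      + Sig⁻¹ *ᵥ ν' ⬝ᵥ (u ω - u ω') - lam / 2 * (ν ⬝ᵥ ν - ν' ⬝ᵥ ν') + Φᵀ *ᵥ d ⬝ᵥ (ω - ω') := by
    rw [hLhat, hLhat]
    exact lagrangian_sub_eq (isHermitian_iff_isSymm.mp hSigpsd.isHermitian).inv ..
  have hresidual : ∀ j, |c j - Φ (sa j) ⬝ᵥ ω| ≤ Real.sqrt D + γ * G + W := fun j =>
    abs_add_mul_sub_dotProduct_le (hrj j) hγ0.le ((abs_le_e2norm g _).trans hg) (hφj j) hωW
  have hG : 0 ≤ G := (e2norm_nonneg g).trans hg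
  have hW : 0 ≤ W := (e2norm_nonneg ω).trans hωW
  have hu : e2norm (u ω) ≤ Real.sqrt D + γ * G + W :=
    e2norm_sampleMoment_le hφj hresidual (by positivity)
  have hdu : e2norm (u ω - u ω') ≤ ε₂ := e2norm_sampleMoment_residual_sub_le hφj c hωdiff
  have hν := e2norm_le_of_e2norm_inv_mulVec_le hSiginv hSignorm hνV
  have hν' := e2norm_le_of_e2norm_inv_mulVec_le hSiginv hSignorm hν'V
  have hνν' := e2norm_le_of_e2norm_inv_mulVec_le hSiginv hSignorm hνdiff
  have h₃ : |lam / 2 * (ν ⬝ᵥ ν - ν' ⬝ᵥ ν')| ≤ ε₁ * (lam * D ^ 2 * V) := by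
    rw [abs_mul, abs_of_pos (half_pos hlam)]
    calc _ ≤ lam / 2 * (2 * (D * V) * (D * ε₁)) := by
          gcongr; exact abs_dotProduct_self_sub_le hν hν' hνν'
      _ = ε₁ * (lam * D ^ 2 * V) := by ring
  have h₁ := abs_le.mp (abs_dotProduct_le_of_e2norm_le hνdiff hu)
  have h₂ := abs_le.mp (abs_dotProduct_le_of_e2norm_le hν'V hdu)
  have h₄ := abs_le.mp (abs_dotProduct_le_of_e2norm_le hd hωdiff)
  rw [hsplit, abs_le]
  constructor <;> linarith [abs_le.mp h₃]

/-- Lipschitz continuity of the empirical Lagrangian in `(ν, ω)`. -/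
theorem empirical_lagrangian_lipschitz
    (S A D m : ℕ) (hm : 0 < m)
    (γ lam G V W ε₁ ε₂ : ℝ) (hγ0 : 0 < γ) (hγ1 : γ < 1) (hlam : 0 < lam)
    (Φ : Matrix (Fin S × Fin A) (Fin D) ℝ)
    (B : Matrix (Fin S) (Fin S × Fin A) ℝ)
    (hB : ∀ s sa, B s sa = if sa.1 = s then 1 else 0)
    -- sample tuples (s⁰_j, (s_j, a_j), r_j, s'_j)
    (s0 : Fin m → Fin S) (sa : Fin m → Fin S × Fin A)
    (rj : Fin m → ℝ) (snext : Fin m → Fin S)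
    (hφj : ∀ j, e2norm (Φ (sa j)) ≤ 1)
    (hrj : ∀ j, |rj j| ≤ Real.sqrt D)
    (Sig : Matrix (Fin D) (Fin D) ℝ)
    (hSiginv : IsUnit Sig.det) (hSigpsd : Sig.PosSemidef) (hSignorm : specNorm Sig ≤ D)
    (d : Fin S × Fin A → ℝ) (hd : e2norm (Φᵀ.mulVec d) ≤ 1 / (1 - γ))
    (g : Fin S → ℝ) (hg : e2norm g ≤ G)
    (ν ν' ω ω' : Fin D → ℝ)
    (hνdiff : e2norm (Sig⁻¹.mulVec (ν - ν')) ≤ ε₁)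
    (hνV : e2norm (Sig⁻¹.mulVec ν) ≤ V) (hν'V : e2norm (Sig⁻¹.mulVec ν') ≤ V)
    (hωdiff : e2norm (ω - ω') ≤ ε₂)
    (hωW : e2norm ω ≤ W) (hω'W : e2norm ω' ≤ W)
    -- the empirical Lagrangian
    (Lhat : (Fin S × Fin A → ℝ) → (Fin D → ℝ) → (Fin S → ℝ) → (Fin D → ℝ) → ℝ)
    (hLhat : ∀ d₀ ν₀ g₀ ω₀, Lhat d₀ ν₀ g₀ ω₀ =
      ν₀ ⬝ᵥ Sig⁻¹.mulVec ((m : ℝ)⁻¹ •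
          ∑ j, (rj j + γ * g₀ (snext j) - Φ (sa j) ⬝ᵥ ω₀) • Φ (sa j))
        - lam / 2 * (ν₀ ⬝ᵥ ν₀)
        + (m : ℝ)⁻¹ * ∑ j, g₀ (s0 j)
        + d₀ ⬝ᵥ (Φ.mulVec ω₀ - Bᵀ.mulVec g₀)) :
    |Lhat d ν g ω - Lhat d ν' g ω'|
      ≤ ε₁ * (Real.sqrt D + γ * G + W + lam * D^2 * V)
        + ε₂ * (V + 1 / (1 - γ)) :=
  empirical_lagrangian_lipschitz_general S A D m γ lam G V W ε₁ ε₂ hγ0 hlam Φ B s0 sa rj snext hφj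
    hrj Sig hSiginv hSigpsd hSignorm d hd g hg ν ν' ω ω' hνdiff hνV hν'V hωdiff hωW Lhat hLhat
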